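/- Let (V1, V2) be commuting isometries on H with defect operator C(V1,V2) = I − V1V1* − V2V2* + V1V2V1*V2*. Then the following are equivalent: (a) C(V1,V2) ≥ 0; (b) V2 W1 ⊆ W1; (c) (V1,V2) is doubly commuting; (d) C(V1,V2) is an orthogonal projection; (e) the fringe operator F2 = P_{W1}V2|_{W1} is an isometry. -/

import Mathlib

/-! With `Eᵢ = Vᵢ Vᵢ*` the range projections of the isometries, double commutation turns
`V₁ V₂ V₁* V₂*` into `E₁ E₂` and makes `E₁, E₂` commute, so `C = (1 - E₁)(1 - E₂)` is a product of
commuting orthogonal projections, hence a projection and positive. Conversely, for `η ∈ ker V₁*`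
one has `C (V₂ η) = -V₁ V₁* V₂ η`, so `⟪C V₂ η, V₂ η⟫ = -‖V₁* V₂ η‖²`, and positivity forces
`V₂ η ∈ ker V₁*`; applied to `x - V₁ V₁* x ∈ ker V₁*` this gives `V₁* V₂ = V₂ V₁*`. The fringe
condition is the same invariance, since `‖P_K z‖ = ‖z‖` iff `z ∈ K` and `‖V₂ η‖ = ‖η‖`. -/

open ContinuousLinearMap Filter Topology Metric
open scoped InnerProductSpace

open Classical in
/-- Orthogonal projection onto a subspace, as an operator on the ambient space. -/
noncomputable def projCLM {H : Type*} [NormedAddCommGroup H] [InnerProductSpace ℂ H]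
    (K : Submodule ℂ H) : H →L[ℂ] H :=
  if h : K.HasOrthogonalProjection then K.subtypeL.comp (@Submodule.orthogonalProjectionOnto ℂ H _ _ _ K h)
  else 0

section StarRing

variable {R : Type*} [Ring R] [StarRing R]

def defect (v₁ v₂ : R) : R :=
  1 - v₁ * star v₁ - v₂ * star v₂ + v₁ * (v₂ * (star v₁ * star v₂))

theorem isStarProjection_mul_star_of_star_mul_self_eq_one {v : R} (hv : star v * v = 1) :
    IsStarProjection (v * star v) where
  isSelfAdjoint := .mul_star_self v
  isIdempotentElem := by
    rw [IsIdempotentElem, mul_assoc, ← mul_assoc (star v), hv, one_mul]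

variable {v₁ v₂ : R}

theorem defect_eq_one_sub_mul_one_sub (hdc : star v₁ * v₂ = v₂ * star v₁) :
    defect v₁ v₂ = (1 - v₁ * star v₁) * (1 - v₂ * star v₂) := by
  calc defect v₁ v₂ = 1 - v₁ * star v₁ - v₂ * star v₂ + v₁ * (v₂ * star v₁) * star v₂ := by
        simp only [defect, mul_assoc]
    _ = _ := by rw [← hdc]; noncomm_ring

theorem isStarProjection_defect (h₁ : star v₁ * v₁ = 1) (h₂ : star v₂ * v₂ = 1)
    (hcomm : v₁ * v₂ = v₂ * v₁) (hdc : star v₁ * v₂ = v₂ * star v₁) :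
    IsStarProjection (defect v₁ v₂) := by
  have hcomm' : star v₂ * star v₁ = star v₁ * star v₂ := by
    simpa only [star_mul] using congr(star $hcomm)
  have hdc' : star v₂ * v₁ = v₁ * star v₂ := by
    simpa only [star_mul, star_star] using congr(star $hdc)
  have hP : Commute (v₁ * star v₁) (v₂ * star v₂) :=
    calc v₁ * star v₁ * (v₂ * star v₂) = v₁ * (star v₁ * v₂) * star v₂ := by noncomm_ring
      _ = v₁ * v₂ * (star v₁ * star v₂) := by rw [hdc]; noncomm_ring
      _ = v₂ * v₁ * (star v₂ * star v₁) := by rw [hcomm, hcomm']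
      _ = v₂ * (star v₂ * v₁) * star v₁ := by rw [hdc']; noncomm_ring
      _ = v₂ * star v₂ * (v₁ * star v₁) := by noncomm_ring
  rw [defect_eq_one_sub_mul_one_sub hdc]
  exact (isStarProjection_mul_star_of_star_mul_self_eq_one h₁).one_sub.mul
    (isStarProjection_mul_star_of_star_mul_self_eq_one h₂).one_sub
    ((Commute.one_right _).sub_right ((Commute.one_left _).sub_left hP))

end StarRing

section Isometry

variable {𝕜 H : Type*} [RCLike 𝕜] [NormedAddCommGroup H] [InnerProductSpace 𝕜 H] [CompleteSpace H]
  {V₁ V₂ : H →L[𝕜] H}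

theorem defect_apply_of_adjoint_apply_eq_zero (h₂ : adjoint V₂ ∘L V₂ = 1) {η : H}
    (hη : adjoint V₁ η = 0) : defect V₁ V₂ (V₂ η) = -V₁ (adjoint V₁ (V₂ η)) := by
  have h₂η : adjoint V₂ (V₂ η) = η := by simpa using congr($h₂ η)
  simp only [defect, sub_apply, add_apply, one_apply_eq_self, mul_apply_eq_comp, star_eq_adjoint,
    h₂η, hη, map_zero]
  abel

theorem adjoint_apply_eq_zero_of_isPositive_defect (h₂ : adjoint V₂ ∘L V₂ = 1)
    (hC : (defect V₁ V₂).IsPositive) {η : H} (hη : adjoint V₁ η = 0) :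
    adjoint V₁ (V₂ η) = 0 := by
  have h := hC.re_inner_nonneg_left (V₂ η)
  rw [defect_apply_of_adjoint_apply_eq_zero h₂ hη, inner_neg_left, ← adjoint_inner_right,
    map_neg, inner_self_eq_norm_sq] at h
  simpa using h

theorem adjoint_comp_comm_of_mapsTo_ker (h₁ : adjoint V₁ ∘L V₁ = 1)
    (hcomm : V₁ ∘L V₂ = V₂ ∘L V₁)
    (h : ∀ η ∈ LinearMap.ker (adjoint V₁ : H →ₗ[𝕜] H),
      V₂ η ∈ LinearMap.ker (adjoint V₁ : H →ₗ[𝕜] H)) :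
    adjoint V₁ ∘L V₂ = V₂ ∘L adjoint V₁ := by
  have h₁' (x : H) : adjoint V₁ (V₁ x) = x := by simpa using congr($h₁ x)
  have hcomm' (x : H) : V₂ (V₁ x) = V₁ (V₂ x) := congr($hcomm x).symm
  ext x
  have := h (x - V₁ (adjoint V₁ x)) (by simp [h₁'])
  simpa [h₁', hcomm', sub_eq_zero] using this

end Isometry

theorem projCLM_eq_starProjection {H : Type*} [NormedAddCommGroup H] [InnerProductSpace ℂ H]
    (K : Submodule ℂ H) [K.HasOrthogonalProjection] : projCLM K = K.starProjection := by
  rw [projCLM, dif_pos ‹_›]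
  rfl

theorem stmt_15_general {H : Type*} [NormedAddCommGroup H] [InnerProductSpace ℂ H] [CompleteSpace H]
    (V1 V2 : H →L[ℂ] H) (hV1 : ∀ x, ‖V1 x‖ = ‖x‖) (hV2 : ∀ x, ‖V2 x‖ = ‖x‖)
    (hcomm : V1 ∘L V2 = V2 ∘L V1)
    (C : H →L[ℂ] H)
    (hCdef : C = 1 - V1 ∘L adjoint V1 - V2 ∘L adjoint V2
        + V1 ∘L V2 ∘L adjoint V1 ∘L adjoint V2)
    (W1 : Submodule ℂ H)
    (hW1 : W1 = LinearMap.ker (adjoint V1 : H →ₗ[ℂ] H)) :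
    [ C.IsPositive,
      ∀ x ∈ W1, V2 x ∈ W1,
      adjoint V1 ∘L V2 = V2 ∘L adjoint V1,
      IsSelfAdjoint C ∧ IsIdempotentElem C,
      ∀ η ∈ W1, ‖projCLM W1 (V2 η)‖ = ‖η‖ ].TFAE := by
  -- on `H →L[ℂ] H`, `∘L` is `*` and `adjoint` is `star`
  obtain rfl : C = defect V1 V2 := hCdef
  subst hW1
  have h₁ := (norm_map_iff_adjoint_comp_self V1).mp hV1
  have h₂ := (norm_map_iff_adjoint_comp_self V2).mp hV2
  tfae_have 1 → 2 := fun hC _ hη ↦ adjoint_apply_eq_zero_of_isPositive_defect h₂ hC hη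
  tfae_have 2 → 3 := adjoint_comp_comm_of_mapsTo_ker h₁ hcomm
  tfae_have 3 → 4 := fun hdc ↦
    have hC := isStarProjection_defect (v₁ := V1) (v₂ := V2) h₁ h₂ hcomm hdc
    ⟨hC.isSelfAdjoint, hC.isIdempotentElem⟩
  tfae_have 4 → 1 := fun ⟨hsa, hid⟩ ↦ .of_isStarProjection ⟨hid, hsa⟩
  tfae_have 2 ↔ 5 := forall₂_congr fun η _ ↦ by
    rw [projCLM_eq_starProjection, ← hV2 η, ← Submodule.mem_iff_norm_starProjection]
  tfae_finish

theorem stmt_15 {H : Type*} [NormedAddCommGroup H] [InnerProductSpace ℂ H] [CompleteSpace H]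
    (V1 V2 : H →L[ℂ] H) (hV1 : ∀ x, ‖V1 x‖ = ‖x‖) (hV2 : ∀ x, ‖V2 x‖ = ‖x‖)
    (hcomm : V1 ∘L V2 = V2 ∘L V1)
    (C : H →L[ℂ] H)
    (hCdef : C = 1 - V1 ∘L adjoint V1 - V2 ∘L adjoint V2
        + V1 ∘L V2 ∘L adjoint V1 ∘L adjoint V2)
    (W1 W2 : Submodule ℂ H)
    (hW1 : W1 = LinearMap.ker (adjoint V1 : H →ₗ[ℂ] H))
    (hW2 : W2 = LinearMap.ker (adjoint V2 : H →ₗ[ℂ] H)) :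
    [ C.IsPositive,
      ∀ x ∈ W1, V2 x ∈ W1,
      adjoint V1 ∘L V2 = V2 ∘L adjoint V1,
      IsSelfAdjoint C ∧ IsIdempotentElem C,
      ∀ η ∈ W1, ‖projCLM W1 (V2 η)‖ = ‖η‖ ].TFAE :=
  stmt_15_general V1 V2 hV1 hV2 hcomm C hCdef W1 hW1
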